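/- Let T_A, T_B be strongly continuous one-parameter groups on real Banach spaces X, Y, with T_A admitting a dichotomy projection P₊ with constants k ≥ 1, α > 0 and associated Green kernel G_A. Let f : X × Y → X be bounded and Lipschitz with constant L, with 4kα⁻¹L < 1. For (ξ,η) ∈ X × Y let (U₁(·;ξ,η), U₂(·;ξ,η)) denote the unique mild solution of the semilinear system with initial value (ξ,η), and define h(ξ,η) := −∫_ℝ G_A(−s) f(U₁(s;ξ,η), U₂(s;ξ,η)) ds. Then for every mild solution (u₁,u₂) of the semilinear system, the pair (t ↦ u₁(t) + h(u₁(t),u₂(t)), t ↦ u₂(t)) is a mild solution of the linear system; that is, u₁(t) + h(u₁(t),u₂(t)) = T_A(t)(u₁(0) + h(u₁(0),u₂(0))) and u₂(t) = T_B(t)u₂(0) for all t ∈ ℝ. -/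

import Mathlib

open MeasureTheory Set

noncomputable section

/-- A strongly continuous one-parameter group on a real Banach space. -/
def IsC0Group {X : Type*} [NormedAddCommGroup X] [NormedSpace ℝ X]
    (T : ℝ → X →L[ℝ] X) : Prop :=
  T 0 = ContinuousLinearMap.id ℝ X ∧
  (∀ t s : ℝ, T (t + s) = (T t).comp (T s)) ∧
  (∀ x : X, Continuous fun t => T t x)

/-- `P` is a dichotomy projection for the group `T` with constants `k ≥ 1`, `α > 0`. -/
def IsDichotomyProjection {X : Type*} [NormedAddCommGroup X] [NormedSpace ℝ X]
    (T : ℝ → X →L[ℝ] X) (P : X →L[ℝ] X) (k α : ℝ) : Prop :=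
  P.comp P = P ∧
  (∀ t : ℝ, P.comp (T t) = (T t).comp P) ∧
  (∀ x : X, ∀ t : ℝ, 0 ≤ t → ‖T t (P x)‖ ≤ k * Real.exp (-α * t) * ‖P x‖) ∧
  (∀ x : X, ∀ t : ℝ, t ≤ 0 → ‖T t (x - P x)‖ ≤ k * Real.exp (α * t) * ‖x - P x‖)

/-- The Green kernel associated to the dichotomy: `G_A(t) = T(t)P₊` for `t ≥ 0`,
`G_A(t) = −T(t)P₋` for `t < 0`. -/
def greenKernel {X : Type*} [NormedAddCommGroup X] [NormedSpace ℝ X]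
    (T : ℝ → X →L[ℝ] X) (P : X →L[ℝ] X) (t : ℝ) : X →L[ℝ] X :=
  if 0 ≤ t then (T t).comp P else -((T t).comp (ContinuousLinearMap.id ℝ X - P))

/-- Mild solution of the semilinear system `∂ₜu₁ = Au₁ + f(u₁,u₂)`, `∂ₜu₂ = Bu₂`. -/
def IsMildSolution {X Y : Type*} [NormedAddCommGroup X] [NormedSpace ℝ X]
    [NormedAddCommGroup Y] [NormedSpace ℝ Y]
    (TA : ℝ → X →L[ℝ] X) (TB : ℝ → Y →L[ℝ] Y)
    (f : X → Y → X) (u₁ : ℝ → X) (u₂ : ℝ → Y) : Prop :=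
  Continuous u₁ ∧ Continuous u₂ ∧
  (∀ t : ℝ, u₁ t = TA t (u₁ 0) + ∫ s in (0:ℝ)..t, TA (t - s) (f (u₁ s) (u₂ s))) ∧
  (∀ t : ℝ, u₂ t = TB t (u₂ 0))

/-- Mild solution of the linear system `∂ₜv₁ = Av₁`, `∂ₜv₂ = Bv₂`. -/
def IsLinearMildSolution {X Y : Type*} [NormedAddCommGroup X] [NormedSpace ℝ X]
    [NormedAddCommGroup Y] [NormedSpace ℝ Y]
    (TA : ℝ → X →L[ℝ] X) (TB : ℝ → Y →L[ℝ] Y)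
    (v₁ : ℝ → X) (v₂ : ℝ → Y) : Prop :=
  Continuous v₁ ∧ Continuous v₂ ∧
  (∀ t : ℝ, v₁ t = TA t (v₁ 0)) ∧ (∀ t : ℝ, v₂ t = TB t (v₂ 0))

variable {X Y : Type*} [NormedAddCommGroup X] [NormedSpace ℝ X] [CompleteSpace X]
  [NormedAddCommGroup Y] [NormedSpace ℝ Y] [CompleteSpace Y]

/-!
Mild solutions of the semilinear system are unique (Grönwall forward in time, and backward
after reversing time), so the solution starting at `(u₁ τ, u₂ τ)` is the time shift of `u`,
and `h (u₁ τ) (u₂ τ) = -∫ G(τ - r) f(u(r)) dr`. Since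
`G(t - r) - T(t) G(-r) = T(t - r) (𝟙_{0 < r} - 𝟙_{t < r})`, the defect
`h(u(t)) - T(t) h(u(0))` is minus the Duhamel integral `∫₀ᵗ T(t - s) f(u(s)) ds`,
which exactly cancels the nonlinear part of `u₁`.
-/

open Filter Topology

section C0Group

variable {E : Type*} [NormedAddCommGroup E] [NormedSpace ℝ E] {T : ℝ → E →L[ℝ] E}

namespace IsC0Group

theorem apply_apply (hT : IsC0Group T) (a b : ℝ) (x : E) : T a (T b x) = T (a + b) x := by
  rw [hT.2.1 a b]; rfl

theorem comp_neg (hT : IsC0Group T) : IsC0Group fun t => T (-t) :=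
  ⟨by simpa using hT.1, fun a b => by simp only [neg_add]; exact hT.2.1 (-a) (-b),
    fun x => (hT.2.2 x).comp continuous_neg⟩

variable [CompleteSpace E]

theorem exists_norm_le_on_Icc (hT : IsC0Group T) (a b : ℝ) :
    ∃ C, 0 ≤ C ∧ ∀ t ∈ Icc a b, ‖T t‖ ≤ C := by
  have hbdd : ∀ x : E, ∃ C, ∀ t : Icc a b, ‖T t x‖ ≤ C := fun x => by
    obtain ⟨C, hC⟩ := isCompact_Icc.bddAbove_image (hT.2.2 x).norm.continuousOn
    exact ⟨C, fun t => hC (mem_image_of_mem _ t.2)⟩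
  obtain ⟨C, hC⟩ := banach_steinhaus (g := fun t : Icc a b => T t) hbdd
  exact ⟨max C 0, le_max_right _ _, fun t ht => (hC ⟨t, ht⟩).trans (le_max_left _ _)⟩

theorem continuous_uncurry (hT : IsC0Group T) : Continuous fun p : ℝ × E => T p.1 p.2 := by
  refine continuous_iff_continuousAt.2 fun ⟨t₀, x₀⟩ => ?_
  obtain ⟨C, -, hC⟩ := hT.exists_norm_le_on_Icc (t₀ - 1) (t₀ + 1)
  have hbound : Tendsto (fun p : ℝ × E => C * ‖p.2 - x₀‖ + ‖T p.1 x₀ - T t₀ x₀‖)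
      (𝓝 (t₀, x₀)) (𝓝 0) := by
    have hc : Continuous fun p : ℝ × E => C * ‖p.2 - x₀‖ + ‖T p.1 x₀ - T t₀ x₀‖ := by
      have := hT.2.2 x₀
      fun_prop
    simpa using hc.tendsto (t₀, x₀)
  have hnear : ∀ᶠ p : ℝ × E in 𝓝 (t₀, x₀), p.1 ∈ Icc (t₀ - 1) (t₀ + 1) :=
    continuous_fst.continuousAt.preimage_mem_nhds (Icc_mem_nhds (by linarith) (by linarith))
  rw [ContinuousAt, tendsto_iff_norm_sub_tendsto_zero]
  refine squeeze_zero' (.of_forall fun _ => norm_nonneg _) ?_ hbound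
  filter_upwards [hnear] with p hp
  calc ‖T p.1 p.2 - T t₀ x₀‖ = ‖T p.1 (p.2 - x₀) + (T p.1 x₀ - T t₀ x₀)‖ := by
        rw [map_sub]; abel
    _ ≤ ‖T p.1 (p.2 - x₀)‖ + ‖T p.1 x₀ - T t₀ x₀‖ := norm_add_le _ _
    _ ≤ C * ‖p.2 - x₀‖ + ‖T p.1 x₀ - T t₀ x₀‖ := by
        gcongr
        exact (T p.1).le_of_opNorm_le (hC _ hp) _

theorem continuous_apply_sub (hT : IsC0Group T) {φ : ℝ → E} (hφ : Continuous φ) (c : ℝ) :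
    Continuous fun s => T (c - s) (φ s) :=
  hT.continuous_uncurry.comp ((continuous_const.sub continuous_id).prodMk hφ)

end IsC0Group

end C0Group

theorem eqOn_zero_of_le_mul_integral {d : ℝ → ℝ} (hd : Continuous d) (hd0 : 0 ≤ d) {K b : ℝ}
    (hle : ∀ r ∈ Icc 0 b, d r ≤ K * ∫ s in (0 : ℝ)..r, d s) : EqOn d 0 (Icc 0 b) := by
  set D : ℝ → ℝ := fun r => ∫ s in (0 : ℝ)..r, d s
  have hD : ∀ r, HasDerivAt D (d r) r := fun r => (hd.integral_hasStrictDerivAt 0 r).hasDerivAt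
  have hD0 : EqOn D 0 (Icc 0 b) := by
    refine eq_zero_of_abs_deriv_le_mul_abs_self_of_eq_zero_right (K := K)
      (fun r _ => (hD r).continuousAt.continuousWithinAt) (fun r _ => (hD r).hasDerivWithinAt)
      intervalIntegral.integral_same fun r hr => ?_
    have hDr : 0 ≤ D r := intervalIntegral.integral_nonneg hr.1 fun s _ => hd0 s
    rw [Real.norm_of_nonneg (hd0 r), Real.norm_of_nonneg hDr]
    exact hle r (Ico_subset_Icc_self hr)
  intro r hr
  refine le_antisymm ?_ (hd0 r)
  calc d r ≤ K * D r := hle r hr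
    _ = 0 := by rw [hD0 hr, Pi.zero_apply, mul_zero]

section Duhamel

variable {E : Type*} [NormedAddCommGroup E] [NormedSpace ℝ E] {T : ℝ → E →L[ℝ] E}

def SatisfiesDuhamel (T : ℝ → E →L[ℝ] E) (φ u : ℝ → E) : Prop :=
  ∀ t : ℝ, u t = T t (u 0) + ∫ s in (0 : ℝ)..t, T (t - s) (φ s)

namespace SatisfiesDuhamel

variable {φ ψ u w : ℝ → E}

theorem comp_neg (hu : SatisfiesDuhamel T φ u) :
    SatisfiesDuhamel (fun t => T (-t)) (fun s => -φ (-s)) (fun t => u (-t)) := by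
  intro t
  have hint : ∫ s in (0 : ℝ)..t, T (-(t - s)) (-φ (-s)) =
      ∫ s in (0 : ℝ)..-t, T (-t - s) (φ s) := by
    calc ∫ s in (0 : ℝ)..t, T (-(t - s)) (-φ (-s))
        = -∫ s in (0 : ℝ)..t, T (-t - -s) (φ (-s)) := by
          simp only [map_neg, intervalIntegral.integral_neg, neg_sub', sub_neg_eq_add]
      _ = ∫ s in (0 : ℝ)..-t, T (-t - s) (φ s) := by
          rw [intervalIntegral.integral_comp_neg (fun s => T (-t - s) (φ s)), neg_zero,
            intervalIntegral.integral_symm, neg_neg]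
  simpa only [neg_zero, hint] using hu (-t)

variable [CompleteSpace E]

theorem comp_add_left (hT : IsC0Group T) (hφ : Continuous φ) (hu : SatisfiesDuhamel T φ u)
    (τ : ℝ) : SatisfiesDuhamel T (fun s => φ (τ + s)) (fun t => u (τ + t)) := by
  intro t
  have hint : ∀ c a b : ℝ, IntervalIntegrable (fun s => T (c - s) (φ s)) volume a b :=
    fun c _ _ => (hT.continuous_apply_sub hφ c).intervalIntegrable _ _
  have hpast : T t (u τ) = T (τ + t) (u 0) + ∫ s in (0 : ℝ)..τ, T (τ + t - s) (φ s) := by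
    rw [hu τ, map_add, hT.apply_apply, add_comm t τ,
      ← ContinuousLinearMap.intervalIntegral_comp_comm _ (hint τ 0 τ)]
    congr 1
    refine intervalIntegral.integral_congr fun s _ => ?_
    simp only [hT.apply_apply]
    ring_nf
  have hrecent : ∫ s in (0 : ℝ)..t, T (t - s) (φ (τ + s)) =
      ∫ s in τ..τ + t, T (τ + t - s) (φ s) := by
    simpa using intervalIntegral.integral_comp_add_left (fun s => T (τ + t - s) (φ s)) τ
      (a := 0) (b := t)
  simp only [add_zero, hpast, hrecent, add_assoc,
    intervalIntegral.integral_add_adjacent_intervals (hint _ 0 τ) (hint _ τ (τ + t))]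
  exact hu (τ + t)

theorem norm_sub_le (hT : IsC0Group T) (hφ : Continuous φ) (hψ : Continuous ψ)
    (hu : SatisfiesDuhamel T φ u) (hw : SatisfiesDuhamel T ψ w) (h0 : u 0 = w 0) {b C : ℝ}
    (hC : ∀ t ∈ Icc 0 b, ‖T t‖ ≤ C) {r : ℝ} (hr : r ∈ Icc 0 b) :
    ‖u r - w r‖ ≤ ∫ s in (0 : ℝ)..r, C * ‖φ s - ψ s‖ := by
  have hdiff : u r - w r = ∫ s in (0 : ℝ)..r, T (r - s) (φ s - ψ s) := by
    simp only [map_sub]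
    rw [intervalIntegral.integral_sub ((hT.continuous_apply_sub hφ r).intervalIntegrable _ _)
      ((hT.continuous_apply_sub hψ r).intervalIntegrable _ _), hu r, hw r, h0]
    abel
  have hbound : Continuous fun s => C * ‖φ s - ψ s‖ := by fun_prop
  rw [hdiff]
  refine intervalIntegral.norm_integral_le_of_norm_le hr.1 (.of_forall fun s hs => ?_)
    (hbound.intervalIntegrable _ _)
  exact (T _).le_of_opNorm_le (hC _ ⟨by linarith [hs.2], by linarith [hs.1, hr.2]⟩) _

variable {g : ℝ → E → E} {L : ℝ}

theorem eqOn_Ici_of_lipschitz (hT : IsC0Group T)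
    (hg : ∀ s x x', ‖g s x - g s x'‖ ≤ L * ‖x - x'‖) (hu : Continuous u) (hw : Continuous w)
    (hgu : Continuous fun s => g s (u s)) (hgw : Continuous fun s => g s (w s))
    (hDu : SatisfiesDuhamel T (fun s => g s (u s)) u)
    (hDw : SatisfiesDuhamel T (fun s => g s (w s)) w) (h0 : u 0 = w 0) :
    EqOn u w (Ici 0) := by
  intro b hb
  obtain ⟨C, hC0, hC⟩ := hT.exists_norm_le_on_Icc 0 b
  have hd : Continuous fun s => ‖u s - w s‖ := by fun_prop
  have hgron :
      ∀ r ∈ Icc 0 b, ‖u r - w r‖ ≤ C * max L 0 * ∫ s in (0 : ℝ)..r, ‖u s - w s‖ := by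
    intro r hr
    rw [← intervalIntegral.integral_const_mul]
    refine (hDu.norm_sub_le hT hgu hgw hDw h0 hC hr).trans
      (intervalIntegral.integral_mono_on hr.1
        ((continuous_const.mul (hgu.sub hgw).norm).intervalIntegrable _ _)
        ((continuous_const.mul hd).intervalIntegrable _ _) fun s _ => ?_)
    rw [mul_assoc]
    gcongr
    exact (hg s _ _).trans (by gcongr; exact le_max_left _ _)
  have := eqOn_zero_of_le_mul_integral hd (fun _ => norm_nonneg _) hgron ⟨hb, le_rfl⟩
  exact sub_eq_zero.1 (norm_eq_zero.1 this)

theorem eq_of_lipschitz (hT : IsC0Group T)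
    (hg : ∀ s x x', ‖g s x - g s x'‖ ≤ L * ‖x - x'‖) (hu : Continuous u) (hw : Continuous w)
    (hgu : Continuous fun s => g s (u s)) (hgw : Continuous fun s => g s (w s))
    (hDu : SatisfiesDuhamel T (fun s => g s (u s)) u)
    (hDw : SatisfiesDuhamel T (fun s => g s (w s)) w) (h0 : u 0 = w 0) : u = w := by
  funext t
  rcases le_or_gt 0 t with ht | ht
  · exact hDu.eqOn_Ici_of_lipschitz hT hg hu hw hgu hgw hDw h0 ht
  · have hg' : ∀ s x x', ‖-g (-s) x - -g (-s) x'‖ ≤ L * ‖x - x'‖ := fun s x x' => by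
      rw [neg_sub_neg, norm_sub_rev]
      exact hg (-s) x x'
    simpa using hDu.comp_neg.eqOn_Ici_of_lipschitz hT.comp_neg hg' (hu.comp continuous_neg)
      (hw.comp continuous_neg) (hgu.comp continuous_neg).neg (hgw.comp continuous_neg).neg
      hDw.comp_neg (by simpa using h0) (neg_nonneg.2 ht.le)

end SatisfiesDuhamel

end Duhamel

theorem continuous_uncurry_of_norm_sub_le {E F G : Type*} [SeminormedAddCommGroup E]
    [SeminormedAddCommGroup F] [SeminormedAddCommGroup G] {f : E → F → G} {L : ℝ}
    (hf : ∀ (x x' : E) (y y' : F), ‖f x y - f x' y'‖ ≤ L * (‖x - x'‖ + ‖y - y'‖)) :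
    Continuous (Function.uncurry f) := by
  refine (LipschitzWith.of_dist_le' (K := 2 * max L 0) fun p q => ?_).continuous
  simp only [dist_eq_norm, Prod.norm_def, Prod.fst_sub, Prod.snd_sub]
  set a := ‖p.1 - q.1‖
  set b := ‖p.2 - q.2‖
  calc ‖f p.1 p.2 - f q.1 q.2‖ ≤ L * (a + b) := hf _ _ _ _
    _ ≤ max L 0 * (a + b) := by gcongr; exact le_max_left _ _
    _ ≤ max L 0 * (2 * max a b) :=
        mul_le_mul_of_nonneg_left (by linarith [le_max_left a b, le_max_right a b])
          (le_max_right _ _)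
    _ = 2 * max L 0 * max a b := by ring

namespace IsMildSolution

variable {E F : Type*} [NormedAddCommGroup E] [NormedSpace ℝ E] [NormedAddCommGroup F]
  [NormedSpace ℝ F] {TA : ℝ → E →L[ℝ] E} {TB : ℝ → F →L[ℝ] F} {f : E → F → E}
  {u₁ w₁ : ℝ → E} {u₂ w₂ : ℝ → F}

theorem satisfiesDuhamel (hu : IsMildSolution TA TB f u₁ u₂) :
    SatisfiesDuhamel TA (fun s => f (u₁ s) (u₂ s)) u₁ :=
  hu.2.2.1

variable [CompleteSpace E]

theorem comp_add_left (hTA : IsC0Group TA) (hTB : IsC0Group TB)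
    (hf : Continuous (Function.uncurry f)) (hu : IsMildSolution TA TB f u₁ u₂) (τ : ℝ) :
    IsMildSolution TA TB f (fun t => u₁ (τ + t)) (fun t => u₂ (τ + t)) := by
  have hu₁ := hu.1
  have hu₂ := hu.2.1
  refine ⟨by fun_prop, by fun_prop,
    hu.satisfiesDuhamel.comp_add_left hTA (hf.comp (hu₁.prodMk hu₂)) τ, fun t => ?_⟩
  show u₂ (τ + t) = TB t (u₂ (τ + 0))
  rw [hu.2.2.2, hu.2.2.2 (τ + 0), hTB.apply_apply, add_zero, add_comm]

theorem unique (hTA : IsC0Group TA) {L : ℝ}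
    (hfL : ∀ (x x' : E) (y y' : F), ‖f x y - f x' y'‖ ≤ L * (‖x - x'‖ + ‖y - y'‖))
    (hu : IsMildSolution TA TB f u₁ u₂) (hw : IsMildSolution TA TB f w₁ w₂)
    (h₁ : u₁ 0 = w₁ 0) (h₂ : u₂ 0 = w₂ 0) : u₁ = w₁ ∧ u₂ = w₂ := by
  obtain rfl : u₂ = w₂ := funext fun t => by rw [hu.2.2.2, hw.2.2.2, h₂]
  have hf := continuous_uncurry_of_norm_sub_le hfL
  refine ⟨SatisfiesDuhamel.eq_of_lipschitz (g := fun s x => f x (u₂ s)) (L := L) hTA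
    (fun s x x' => ?_) hu.1 hw.1 (hf.comp (hu.1.prodMk hu.2.1)) (hf.comp (hw.1.prodMk hu.2.1))
    hu.satisfiesDuhamel hw.satisfiesDuhamel h₁, rfl⟩
  simpa using hfL x x' (u₂ s) (u₂ s)

end IsMildSolution

theorem integrable_exp_neg_mul_abs {α : ℝ} (hα : 0 < α) :
    Integrable fun x : ℝ => Real.exp (-α * |x|) := by
  rw [← integrableOn_univ, ← Iic_union_Ioi (a := 0), integrableOn_union]
  refine ⟨(integrableOn_exp_mul_Iic hα 0).congr_fun (fun x hx => ?_) measurableSet_Iic,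
    (integrableOn_exp_mul_Ioi (neg_neg_of_pos hα) 0).congr_fun (fun x hx => ?_)
      measurableSet_Ioi⟩
  · rw [abs_of_nonpos hx, neg_mul_neg]
  · rw [abs_of_pos hx]

section GreenKernel

variable {E : Type*} [NormedAddCommGroup E] [NormedSpace ℝ E] {T : ℝ → E →L[ℝ] E}
  {P : E →L[ℝ] E} {k α : ℝ}

theorem greenKernel_apply (T : ℝ → E →L[ℝ] E) (P : E →L[ℝ] E) (s : ℝ) (x : E) :
    greenKernel T P s x = T s (P x) - if s < 0 then T s x else 0 := by
  rcases le_or_gt 0 s with hs | hs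
  · simp [greenKernel, hs, not_lt.2 hs]
  · simp [greenKernel, hs, not_le.2 hs]

theorem norm_greenKernel_apply_le (hP : IsDichotomyProjection T P k α) (hk : 0 ≤ k) (s : ℝ)
    (x : E) : ‖greenKernel T P s x‖ ≤ k * (1 + ‖P‖) * Real.exp (-α * |s|) * ‖x‖ := by
  have hPx : ‖P x‖ ≤ (1 + ‖P‖) * ‖x‖ := by nlinarith [P.le_opNorm x, norm_nonneg x]
  have hQx : ‖x - P x‖ ≤ (1 + ‖P‖) * ‖x‖ := by
    linarith [norm_sub_le x (P x), P.le_opNorm x]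
  unfold greenKernel
  split_ifs with hs
  · rw [abs_of_nonneg hs]
    calc ‖T s (P x)‖ ≤ k * Real.exp (-α * s) * ‖P x‖ := hP.2.2.1 x s hs
      _ ≤ k * Real.exp (-α * s) * ((1 + ‖P‖) * ‖x‖) := by gcongr
      _ = _ := by ring
  · rw [abs_of_neg (not_le.1 hs)]
    calc ‖-T s (x - P x)‖ ≤ k * Real.exp (α * s) * ‖x - P x‖ := by
          rw [norm_neg]; exact hP.2.2.2 x s (not_le.1 hs).le
      _ ≤ k * Real.exp (α * s) * ((1 + ‖P‖) * ‖x‖) := by gcongr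
      _ = _ := by ring_nf

theorem greenKernel_sub_apply_greenKernel (hT : IsC0Group T) (φ : ℝ → E) (t r : ℝ) :
    greenKernel T P (t - r) (φ r) - T t (greenKernel T P (-r) (φ r)) =
      (Ioc 0 t).indicator (fun s => T (t - s) (φ s)) r -
        (Ioc t 0).indicator (fun s => T (t - s) (φ s)) r := by
  simp only [greenKernel_apply, map_sub, apply_ite (T t), hT.apply_apply, map_zero, indicator,
    mem_Ioc, sub_neg, Left.neg_neg_iff, ← not_lt, ← sub_eq_add_neg]
  by_cases h₀ : 0 < r <;> by_cases hₜ : t < r <;> simp [h₀, hₜ]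

variable [CompleteSpace E]

theorem integrable_greenKernel_apply (hT : IsC0Group T) (hP : IsDichotomyProjection T P k α)
    (hk : 0 ≤ k) (hα : 0 < α) {φ : ℝ → E} (hφ : Continuous φ) {M : ℝ}
    (hφM : ∀ r, ‖φ r‖ ≤ M) (c : ℝ) :
    Integrable fun r => greenKernel T P (c - r) (φ r) := by
  have hmeas : AEStronglyMeasurable (fun r => greenKernel T P (c - r) (φ r)) := by
    simp only [greenKernel_apply]
    exact (hT.continuous_apply_sub (P.continuous.comp hφ) c).aestronglyMeasurable.sub
      ((hT.continuous_apply_sub hφ c).stronglyMeasurable.ite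
        (measurableSet_lt (by fun_prop) measurable_const)
        stronglyMeasurable_const).aestronglyMeasurable
  refine (((integrable_exp_neg_mul_abs hα).comp_sub_left c).const_mul
    (k * (1 + ‖P‖) * M)).mono' hmeas (.of_forall fun r => ?_)
  calc ‖greenKernel T P (c - r) (φ r)‖ ≤ k * (1 + ‖P‖) * Real.exp (-α * |c - r|) * ‖φ r‖ :=
        norm_greenKernel_apply_le hP hk _ _
    _ ≤ k * (1 + ‖P‖) * Real.exp (-α * |c - r|) * M := by gcongr; exact hφM r
    _ = k * (1 + ‖P‖) * M * Real.exp (-α * |c - r|) := by ring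

theorem integral_greenKernel_sub (hT : IsC0Group T) (hP : IsDichotomyProjection T P k α)
    (hk : 0 ≤ k) (hα : 0 < α) {φ : ℝ → E} (hφ : Continuous φ) {M : ℝ}
    (hφM : ∀ r, ‖φ r‖ ≤ M) (t : ℝ) :
    (∫ r, greenKernel T P (t - r) (φ r)) - T t (∫ r, greenKernel T P (-r) (φ r)) =
      ∫ s in (0 : ℝ)..t, T (t - s) (φ s) := by
  have hG₀ : Integrable fun r => greenKernel T P (-r) (φ r) := by
    simpa using integrable_greenKernel_apply hT hP hk hα hφ hφM 0
  have hint : ∀ a b, Integrable ((Ioc a b).indicator fun s => T (t - s) (φ s)) := fun a b =>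
    (hT.continuous_apply_sub hφ t).integrableOn_Ioc.integrable_indicator measurableSet_Ioc
  rw [← (T t).integral_comp_comm hG₀, ← integral_sub
    (integrable_greenKernel_apply hT hP hk hα hφ hφM t) ((T t).integrable_comp hG₀)]
  simp only [greenKernel_sub_apply_greenKernel hT φ t]
  rw [integral_sub (hint 0 t) (hint t 0), integral_indicator measurableSet_Ioc,
    integral_indicator measurableSet_Ioc, intervalIntegral]

end GreenKernel

theorem H_sends_solutions_to_linear_solutions_general
    (TA : ℝ → X →L[ℝ] X) (TB : ℝ → Y →L[ℝ] Y)
    (hTA : IsC0Group TA) (hTB : IsC0Group TB)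
    (P : X →L[ℝ] X) (k α : ℝ) (hk : 1 ≤ k) (hα : 0 < α)
    (hP : IsDichotomyProjection TA P k α)
    (f : X → Y → X) (Mf L : ℝ)
    (hfB : ∀ (x : X) (y : Y), ‖f x y‖ ≤ Mf)
    (hfL : ∀ (x x' : X) (y y' : Y), ‖f x y - f x' y'‖ ≤ L * (‖x - x'‖ + ‖y - y'‖))
    -- the family of mild solutions with prescribed initial values
    (U₁ : X → Y → ℝ → X) (U₂ : X → Y → ℝ → Y)
    (hU : ∀ (ξ : X) (η : Y), IsMildSolution TA TB f (U₁ ξ η) (U₂ ξ η) ∧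
      U₁ ξ η 0 = ξ ∧ U₂ ξ η 0 = η)
    (h : X → Y → X)
    (hh : ∀ (ξ : X) (η : Y),
      h ξ η = -∫ s : ℝ, greenKernel TA P (-s) (f (U₁ ξ η s) (U₂ ξ η s))) :
    ∀ (u₁ : ℝ → X) (u₂ : ℝ → Y), IsMildSolution TA TB f u₁ u₂ →
      (∀ t : ℝ, u₁ t + h (u₁ t) (u₂ t) = TA t (u₁ 0 + h (u₁ 0) (u₂ 0))) ∧
      (∀ t : ℝ, u₂ t = TB t (u₂ 0)) := by
  intro u₁ u₂ hu
  refine ⟨fun t => ?_, hu.2.2.2⟩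
  have hf := continuous_uncurry_of_norm_sub_le hfL
  have h_along :
      ∀ τ, h (u₁ τ) (u₂ τ) = -∫ r, greenKernel TA P (τ - r) (f (u₁ r) (u₂ r)) := by
    intro τ
    obtain ⟨hV, hV₁, hV₂⟩ := hU (u₁ τ) (u₂ τ)
    obtain ⟨hshift₁, hshift₂⟩ : (fun s => u₁ (τ + s)) = U₁ (u₁ τ) (u₂ τ) ∧
        (fun s => u₂ (τ + s)) = U₂ (u₁ τ) (u₂ τ) :=
      (hu.comp_add_left hTA hTB hf τ).unique hTA hfL hV (by simpa using hV₁.symm)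
        (by simpa using hV₂.symm)
    rw [hh, ← hshift₁, ← hshift₂,
      ← integral_add_left_eq_self (fun r => greenKernel TA P (τ - r) (f (u₁ r) (u₂ r))) τ]
    simp
  have hduhamel := integral_greenKernel_sub (φ := fun s => f (u₁ s) (u₂ s)) hTA hP
    (zero_le_one.trans hk) hα (hf.comp (hu.1.prodMk hu.2.1)) (fun r => hfB _ _) t
  rw [h_along, h_along, map_add, map_neg, hu.satisfiesDuhamel t]
  simp only [zero_sub]
  rw [← hduhamel]
  abel

/-- `H = id + (h,0)` sends mild solutions of the semilinear system to mild solutions of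
the linear system. -/
theorem H_sends_solutions_to_linear_solutions
    (TA : ℝ → X →L[ℝ] X) (TB : ℝ → Y →L[ℝ] Y)
    (hTA : IsC0Group TA) (hTB : IsC0Group TB)
    (P : X →L[ℝ] X) (k α : ℝ) (hk : 1 ≤ k) (hα : 0 < α)
    (hP : IsDichotomyProjection TA P k α)
    (f : X → Y → X) (Mf L : ℝ)
    (hfB : ∀ (x : X) (y : Y), ‖f x y‖ ≤ Mf)
    (hfL : ∀ (x x' : X) (y y' : Y), ‖f x y - f x' y'‖ ≤ L * (‖x - x'‖ + ‖y - y'‖))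
    (hsmall : 4 * k * α⁻¹ * L < 1)
    -- the family of mild solutions with prescribed initial values
    (U₁ : X → Y → ℝ → X) (U₂ : X → Y → ℝ → Y)
    (hU : ∀ (ξ : X) (η : Y), IsMildSolution TA TB f (U₁ ξ η) (U₂ ξ η) ∧
      U₁ ξ η 0 = ξ ∧ U₂ ξ η 0 = η)
    (h : X → Y → X)
    (hh : ∀ (ξ : X) (η : Y),
      h ξ η = -∫ s : ℝ, greenKernel TA P (-s) (f (U₁ ξ η s) (U₂ ξ η s))) :
    ∀ (u₁ : ℝ → X) (u₂ : ℝ → Y), IsMildSolution TA TB f u₁ u₂ →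
      (∀ t : ℝ, u₁ t + h (u₁ t) (u₂ t) = TA t (u₁ 0 + h (u₁ 0) (u₂ 0))) ∧
      (∀ t : ℝ, u₂ t = TB t (u₂ 0)) :=
  H_sends_solutions_to_linear_solutions_general TA TB hTA hTB P k α hk hα hP f Mf L hfB hfL U₁ U₂ hU
    h hh
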